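/- arXiv:2404.05672 — 2 statements merged into one kernel-verified Lean document; each statement's English description precedes it below -/
import Mathlib

section
/- Let R be the bivariate formal power series over ℚ in variables x and y whose coefficient of x^n y^k (for n ≥ 1, k ≥ 0) is the number of Catalan words of length n with exactly k runs of ascents, and whose coefficient of x^0 y^k is 0 for all k. Then R satisfies the functional equation R = x·y + x·(1+y)·R + x·R². -/
/-- The set of Catalan words of length `n`: words `w` over ℕ with `w 1 = 0` and
`w (i+1) ≤ w i + 1` for all `i`. -/
def CatalanWord (n : ℕ) : Set (List ℕ) :=
  {w | w.length = n ∧ w.getD 0 0 = 0 ∧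
    ∀ i, i + 1 < n → w.getD (i + 1) 0 ≤ w.getD i 0 + 1}

/-- Number of runs of ascents of `w`: `1 + #{i : w i ≥ w (i+1)}`. -/
def ascRuns (w : List ℕ) : ℕ :=
  1 + ((Finset.range (w.length - 1)).filter
    (fun i => w.getD (i + 1) 0 ≤ w.getD i 0)).card

/-!
Every nonempty Catalan word factors uniquely as `w = 0 (u + 1) v`, where `u` and `v` are Catalan
words (possibly empty) and `v` is the suffix starting at the second `0` of `w` (empty if there
is none). The step
`0 → u₁ + 1` is an ascent and the step into `v` is a weak descent, so
`runs w = runs u + runs v`, where `runs []` is read as `1` for `u` and as `0` for `v`.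
Counting by length and runs, this bijection says `R = x (y + R) (1 + R)`, which expands to the
equation. The series are counting series of weighted types: disjoint unions and products of
weighted types go to sums and products of series.
-/

namespace MvPowerSeries

variable {σ α β : Type*} (R : Type*) [CommSemiring R]

/-- `Nat.card` of an infinite fibre is `0`, hence the finiteness hypotheses below. -/
noncomputable def weightGF (wt : α → σ →₀ ℕ) : MvPowerSeries σ R :=
  fun d => Nat.card {a // wt a = d}

variable {R}

theorem coeff_weightGF (wt : α → σ →₀ ℕ) (d : σ →₀ ℕ) :
    coeff d (weightGF R wt) = Nat.card {a // wt a = d} := rfl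

theorem weightGF_congr {wt₁ : α → σ →₀ ℕ} {wt₂ : β → σ →₀ ℕ} (e : α ≃ β)
    (he : ∀ a, wt₂ (e a) = wt₁ a) : weightGF R wt₁ = weightGF R wt₂ :=
  ext fun d => by
    rw [coeff_weightGF, coeff_weightGF,
      Nat.card_congr
        (e.subtypeEquiv (p := (wt₁ · = d)) (q := (wt₂ · = d)) fun a => by rw [he])]

theorem weightGF_const [Unique α] (d : σ →₀ ℕ) :
    weightGF R (fun _ : α => d) = monomial d 1 := by
  classical
  ext e
  rw [coeff_weightGF, coeff_monomial]
  split_ifs with h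
  · subst h
    simp
  · simp [Ne.symm h]

theorem weightGF_sum (wt₁ : α → σ →₀ ℕ) (wt₂ : β → σ →₀ ℕ)
    [∀ d, Finite {a // wt₁ a = d}] [∀ d, Finite {b // wt₂ b = d}] :
    weightGF R (Sum.elim wt₁ wt₂) = weightGF R wt₁ + weightGF R wt₂ := by
  ext d
  rw [map_add, coeff_weightGF, coeff_weightGF, coeff_weightGF, ← Nat.cast_add, ← Nat.card_sum]
  exact congrArg _ (Nat.card_congr Equiv.subtypeSum)

theorem weightGF_prod (wt₁ : α → σ →₀ ℕ) (wt₂ : β → σ →₀ ℕ)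
    [∀ d, Finite {a // wt₁ a = d}] [∀ d, Finite {b // wt₂ b = d}] :
    weightGF R (fun p : α × β => wt₁ p.1 + wt₂ p.2) =
      weightGF R wt₁ * weightGF R wt₂ := by
  classical
  ext d
  let e : {p : α × β // wt₁ p.1 + wt₂ p.2 = d} ≃
      Σ q : Finset.HasAntidiagonal.antidiagonal d,
        {a // wt₁ a = q.1.1} × {b // wt₂ b = q.1.2} :=
    { toFun p := ⟨⟨(wt₁ p.1.1, wt₂ p.1.2), Finset.HasAntidiagonal.mem_antidiagonal.2 p.2⟩,
        ⟨p.1.1, rfl⟩, ⟨p.1.2, rfl⟩⟩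
      invFun q := ⟨(q.2.1, q.2.2), by
        rw [q.2.1.2, q.2.2.2]
        exact Finset.HasAntidiagonal.mem_antidiagonal.1 q.1.2⟩
      left_inv _ := rfl
      right_inv := by
        rintro ⟨⟨⟨q₁, q₂⟩, hq⟩, ⟨a, ha⟩, ⟨b, hb⟩⟩
        dsimp only at ha hb
        subst ha hb
        rfl }
  rw [coeff_mul, coeff_weightGF, Nat.card_congr e, Nat.card_sigma, Nat.cast_sum]
  simp only [Nat.card_prod, Nat.cast_mul, coeff_weightGF]
  exact Finset.sum_coe_sort _ fun q : (σ →₀ ℕ) × (σ →₀ ℕ) =>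
    (Nat.card {a // wt₁ a = q.1} : R) * Nat.card {b // wt₂ b = q.2}

theorem weightGF_single_add [DecidableEq σ] (s : σ) (wt : α → σ →₀ ℕ) :
    weightGF R (fun a => Finsupp.single s 1 + wt a) = X s * weightGF R wt := by
  ext d
  rw [X_def, coeff_monomial_mul, one_mul, coeff_weightGF, coeff_weightGF]
  split_ifs with h
  · exact congrArg _ (Nat.card_congr (Equiv.subtypeEquivRight fun a => by
      rw [eq_tsub_iff_add_eq_of_le h, add_comm]))
  · have : IsEmpty {a // Finsupp.single s 1 + wt a = d} :=
      ⟨fun ⟨a, ha⟩ => h (ha ▸ le_self_add)⟩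
    simp

end MvPowerSeries

namespace List

variable {α β : Type*} [LinearOrder α] [LinearOrder β]

def weakDescents : List α → ℕ
  | a :: b :: t => (if b ≤ a then 1 else 0) + weakDescents (b :: t)
  | _ => 0

@[simp] theorem weakDescents_singleton (a : α) : weakDescents [a] = 0 := rfl

theorem weakDescents_cons_cons (a b : α) (t : List α) :
    weakDescents (a :: b :: t) = (if b ≤ a then 1 else 0) + weakDescents (b :: t) := rfl

theorem weakDescents_cons (a : α) {l : List α} (hl : l ≠ []) :
    weakDescents (a :: l) = (if l.head hl ≤ a then 1 else 0) + weakDescents l := by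
  obtain ⟨b, t, rfl⟩ := exists_cons_of_ne_nil hl
  rfl

theorem weakDescents_map {f : α → β} (hf : StrictMono f) (l : List α) :
    weakDescents (l.map f) = weakDescents l := by
  induction l with
  | nil => rfl
  | cons a t ih =>
    cases t with
    | nil => rfl
    | cons b s =>
      simp only [map_cons, weakDescents_cons_cons, hf.le_iff_le] at ih ⊢
      rw [ih]

theorem weakDescents_append {l₁ l₂ : List α} (h₁ : l₁ ≠ []) (h₂ : l₂ ≠ []) :
    weakDescents (l₁ ++ l₂) =
      weakDescents l₁ + (if l₂.head h₂ ≤ l₁.getLast h₁ then 1 else 0) +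
        weakDescents l₂ := by
  induction l₁ with
  | nil => exact absurd rfl h₁
  | cons a t ih =>
    rcases eq_or_ne t [] with rfl | ht
    · rw [cons_append, nil_append, weakDescents_cons a h₂, weakDescents_singleton,
        getLast_singleton, zero_add]
    · rw [cons_append, weakDescents_cons a (append_ne_nil_of_left_ne_nil ht _),
        head_append_of_ne_nil ht, ih ht, weakDescents_cons a ht, getLast_cons ht]
      omega

end List

theorem ascRuns_eq_one_add_weakDescents (w : List ℕ) : ascRuns w = 1 + w.weakDescents := by
  unfold ascRuns
  congr 1
  induction w with
  | nil => rfl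
  | cons a t ih =>
    cases t with
    | nil => rfl
    | cons b s =>
      rw [Finset.card_filter] at ih ⊢
      simp only [List.length_cons, Nat.add_sub_cancel, List.getD_cons_succ] at ih ⊢
      rw [Finset.sum_range_succ', List.weakDescents_cons_cons, ← ih]
      simp only [List.getD_cons_succ, List.getD_cons_zero]
      omega

def IsCatalan (w : List ℕ) : Prop :=
  (∀ a ∈ w.head?, a = 0) ∧ w.IsChain (fun a b => b ≤ a + 1)

theorem isCatalan_nil : IsCatalan [] := ⟨by simp, List.isChain_nil⟩

theorem mem_catalanWord_iff {w : List ℕ} {n : ℕ} :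
    w ∈ CatalanWord n ↔ w.length = n ∧ IsCatalan w := by
  simp only [CatalanWord, IsCatalan, Set.mem_ofPred_eq, List.isChain_iff_getElem]
  refine and_congr_right fun hn => and_congr (by cases w <;> simp) (forall_congr' fun i => ?_)
  subst hn
  refine ⟨fun h hi => ?_, fun h hi => ?_⟩ <;>
    simpa [List.getD_eq_getElem, hi, Nat.lt_of_succ_lt hi] using h hi

theorem List.IsChain.le_head_add_length {a : ℕ} {t : List ℕ}
    (h : (a :: t).IsChain (fun a b => b ≤ a + 1)) : ∀ x ∈ a :: t, x ≤ a + t.length := by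
  induction t generalizing a with
  | nil => simp
  | cons b t ih =>
    rw [List.isChain_cons_cons] at h
    intro x hx
    rcases List.mem_cons.1 hx with rfl | hx
    · omega
    · have := ih h.2 x hx
      simp only [List.length_cons]
      omega

theorem IsCatalan.lt_length {w : List ℕ} (hw : IsCatalan w) : ∀ x ∈ w, x < w.length := by
  obtain _ | ⟨a, t⟩ := w
  · simp
  · obtain rfl : a = 0 := hw.1 a rfl
    intro x hx
    have := hw.2.le_head_add_length x hx
    simp only [List.length_cons]
    omega

theorem CatalanWord.finite (n : ℕ) : (CatalanWord n).Finite := by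
  refine ((List.finite_length_eq (Fin n) n).image (List.map Fin.val)).subset fun w hw => ?_
  obtain ⟨rfl, hcat⟩ := mem_catalanWord_iff.1 hw
  refine ⟨w.pmap Fin.mk hcat.lt_length, by simp, ?_⟩
  rw [List.map_pmap, List.pmap_eq_map, List.map_id']

theorem finite_fiber_of_isCatalan {p : List ℕ → Prop} (hp : ∀ w, p w → IsCatalan w)
    {wt : List ℕ → Fin 2 →₀ ℕ} (hwt : ∀ w, wt w 0 = w.length) (d : Fin 2 →₀ ℕ) :
    Finite {w : {w // p w} // wt w = d} :=
  have := (CatalanWord.finite (d 0)).to_subtype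
  Finite.of_injective (β := CatalanWord (d 0))
    (fun w => ⟨w.1.1, mem_catalanWord_iff.2 ⟨by rw [← hwt, w.2], hp _ w.1.2⟩⟩)
    fun _ _ h => Subtype.ext (Subtype.ext (Subtype.mk.inj h))

def catalanJoin (u v : List ℕ) : List ℕ := 0 :: (u.map (· + 1) ++ v)

def catalanSplit (w : List ℕ) : List ℕ × List ℕ :=
  ((w.tail.takeWhile (· ≠ 0)).map (· - 1), w.tail.dropWhile (· ≠ 0))

theorem catalanSplit_catalanJoin (u : List ℕ) {v : List ℕ} (hv : ∀ a ∈ v.head?, a = 0) :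
    catalanSplit (catalanJoin u v) = (u, v) := by
  have hu : ∀ x ∈ u.map (· + 1), decide (x ≠ 0) = true := by simp
  have hv' : v.takeWhile (· ≠ 0) = [] ∧ v.dropWhile (· ≠ 0) = v := by
    obtain _ | ⟨b, s⟩ := v
    · simp
    · obtain rfl : b = 0 := hv b rfl
      simp
  simp only [catalanSplit, catalanJoin, List.tail_cons, List.takeWhile_append_of_pos hu,
    List.dropWhile_append_of_pos hu, hv', List.append_nil, List.map_map]
  simp [Function.comp_def]

theorem catalanJoin_catalanSplit {w : List ℕ} (h0 : ∀ a ∈ w.head?, a = 0) (hne : w ≠ []) :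
    catalanJoin (catalanSplit w).1 (catalanSplit w).2 = w := by
  obtain ⟨a, t, rfl⟩ := List.exists_cons_of_ne_nil hne
  obtain rfl : a = 0 := h0 a rfl
  have hpos : ∀ x ∈ t.takeWhile (· ≠ 0), x - 1 + 1 = x := fun x hx => by
    have := List.mem_takeWhile_imp hx
    simp only [ne_eq, decide_eq_true_eq] at this
    omega
  simp only [catalanJoin, catalanSplit, List.tail_cons, List.map_map, Function.comp_def,
    List.map_congr_left hpos, List.map_id', List.takeWhile_append_dropWhile]

theorem isCatalan_catalanJoin {u v : List ℕ} (hu : IsCatalan u) (hv : IsCatalan v) :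
    IsCatalan (catalanJoin u v) := by
  refine ⟨by simp [catalanJoin], List.isChain_cons.2 ⟨fun y hy => ?_,
    List.isChain_append.2 ⟨(List.isChain_map _).2 (hu.2.imp fun _ _ h => by omega), hv.2,
      fun _ _ y hy => by simp [hv.1 y hy]⟩⟩⟩
  obtain _ | ⟨a, t⟩ := u
  · simp [hv.1 y hy]
  · obtain rfl : a = 0 := hu.1 a rfl
    simp_all

theorem isCatalan_catalanSplit {w : List ℕ} (hw : IsCatalan w) :
    IsCatalan (catalanSplit w).1 ∧ IsCatalan (catalanSplit w).2 := by
  obtain _ | ⟨a, t⟩ := w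
  · exact ⟨isCatalan_nil, isCatalan_nil⟩
  obtain rfl : a = 0 := hw.1 a rfl
  obtain ⟨ht₁, ht⟩ := List.isChain_cons.1 hw.2
  refine ⟨⟨fun y hy => ?_, (List.isChain_map _).2 ?_⟩,
    ⟨fun y hy => ?_, ht.infix (List.dropWhile_suffix _).isInfix⟩⟩
  · simp only [catalanSplit, List.tail_cons, List.head?_map, List.head?_takeWhile,
      Option.mem_def, Option.map_eq_some_iff, Option.filter_eq_some_iff] at hy
    obtain ⟨b, ⟨hb, -⟩, rfl⟩ := hy
    have := ht₁ b hb
    omega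
  · exact (ht.infix (List.takeWhile_prefix _).isInfix).imp fun _ _ h => by omega
  · have := List.head?_dropWhile_not (· ≠ 0) t
    simp only [catalanSplit, List.tail_cons] at hy
    rw [hy] at this
    simpa using this

theorem weakDescents_catalanJoin (u : List ℕ) {v : List ℕ} (hv : ∀ a ∈ v.head?, a = 0) :
    (catalanJoin u v).weakDescents =
      u.weakDescents + if v = [] then 0 else 1 + v.weakDescents := by
  have hu : (0 :: u.map (· + 1)).weakDescents = u.weakDescents := by
    obtain _ | ⟨a, t⟩ := u
    · rfl
    · rw [List.map_cons, List.weakDescents_cons_cons, ← List.map_cons (f := (· + 1)) (a := a)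
        (l := t), List.weakDescents_map fun _ _ => Nat.succ_lt_succ]
      simp
  split_ifs with hv'
  · rw [catalanJoin, hv', List.append_nil, hu, add_zero]
  · rw [catalanJoin, ← List.cons_append, List.weakDescents_append (List.cons_ne_nil _ _) hv', hu,
      hv _ (List.head_mem_head? hv'), if_pos (Nat.zero_le _), add_assoc]

def catalanJoinEquiv : {u // IsCatalan u} × {v // IsCatalan v} ≃ {w // IsCatalan w ∧ w ≠ []}
    where
  toFun p := ⟨catalanJoin p.1 p.2, isCatalan_catalanJoin p.1.2 p.2.2, List.cons_ne_nil _ _⟩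
  invFun w := (⟨_, (isCatalan_catalanSplit w.2.1).1⟩, ⟨_, (isCatalan_catalanSplit w.2.1).2⟩)
  left_inv p := by
    have := catalanSplit_catalanJoin p.1.1 p.2.2.1
    ext1 <;> ext1 <;> simp only [this]
  right_inv w := Subtype.ext (catalanJoin_catalanSplit w.2.1.1 w.2.2)

def catalanEquivSum : {w // IsCatalan w} ≃ Unit ⊕ {w // IsCatalan w ∧ w ≠ []} where
  toFun w := if h : w.1 = [] then .inl () else .inr ⟨w.1, w.2, h⟩
  invFun := Sum.elim (fun _ => ⟨[], isCatalan_nil⟩) fun w => ⟨w.1, w.2.1⟩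
  left_inv w := by
    by_cases h : w.1 = []
    · simp only [h, dite_true, Sum.elim_inl]
      exact Subtype.ext h.symm
    · simp [h]
  right_inv := by
    rintro (⟨⟩ | w)
    · simp
    · simp [w.2.2]

open MvPowerSeries

variable {R : Type*} [CommSemiring R]

theorem weightGF_isCatalan (wt : List ℕ → Fin 2 →₀ ℕ) (hwt : ∀ w, wt w 0 = w.length) :
    weightGF R (fun w : {w // IsCatalan w} => wt w) =
      monomial (wt []) 1 + weightGF R (fun w : {w // IsCatalan w ∧ w ≠ []} => wt w) := by
  have := finite_fiber_of_isCatalan (p := fun w => IsCatalan w ∧ w ≠ []) (fun _ h => h.1) hwt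
  rw [← weightGF_const (α := Unit), ← weightGF_sum]
  refine weightGF_congr catalanEquivSum fun w => ?_
  by_cases h : w.1 = [] <;> simp [catalanEquivSum, h]

noncomputable def lengthRunsWeight (w : List ℕ) : Fin 2 →₀ ℕ :=
  Finsupp.single 0 w.length + Finsupp.single 1 (ascRuns w)

@[simp] theorem lengthRunsWeight_apply_zero (w : List ℕ) : lengthRunsWeight w 0 = w.length := by
  simp [lengthRunsWeight]

theorem lengthRunsWeight_nil : lengthRunsWeight [] = Finsupp.single 1 1 := by
  simp [lengthRunsWeight, ascRuns]

theorem lengthRunsWeight_eq_iff {w : List ℕ} {n k : ℕ} :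
    lengthRunsWeight w = Finsupp.single 0 n + Finsupp.single 1 k ↔
      w.length = n ∧ ascRuns w = k := by
  refine ⟨fun h => ⟨?_, ?_⟩, fun ⟨hn, hk⟩ => by rw [lengthRunsWeight, hn, hk]⟩
  · simpa [lengthRunsWeight] using DFunLike.congr_fun h 0
  · simpa [lengthRunsWeight] using DFunLike.congr_fun h 1

theorem lengthRunsWeight_catalanJoin (u : List ℕ) {v : List ℕ} (hv : ∀ a ∈ v.head?, a = 0) :
    lengthRunsWeight (catalanJoin u v) = Finsupp.single 0 1 +
      (lengthRunsWeight u + if v = [] then 0 else lengthRunsWeight v) := by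
  have hlen : (catalanJoin u v).length = 1 + u.length + v.length := by
    simp only [catalanJoin, List.length_cons, List.length_append, List.length_map]
    omega
  simp only [lengthRunsWeight, ascRuns_eq_one_add_weakDescents, weakDescents_catalanJoin u hv,
    hlen]
  split_ifs with h
  · subst h
    simp only [Finsupp.single_add, List.length_nil, add_zero]
    abel
  · simp only [Finsupp.single_add]
    abel

noncomputable def catalanRunsGF (R : Type*) [CommSemiring R] : MvPowerSeries (Fin 2) R :=
  weightGF R fun w : {w // IsCatalan w ∧ w ≠ []} => lengthRunsWeight w

theorem catalanRunsGF_eq :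
    catalanRunsGF R = X 0 * ((X 1 + catalanRunsGF R) * (1 + catalanRunsGF R)) := by
  have hu : weightGF R (fun u : {u // IsCatalan u} => lengthRunsWeight u) =
      X 1 + catalanRunsGF R := by
    rw [weightGF_isCatalan _ lengthRunsWeight_apply_zero, lengthRunsWeight_nil, X_def]
    rfl
  have hv : weightGF R (fun v : {v // IsCatalan v} => if v.1 = [] then 0 else lengthRunsWeight v) =
      1 + catalanRunsGF R := by
    rw [weightGF_isCatalan (fun v => if v = [] then 0 else lengthRunsWeight v)
        (fun v => by split_ifs with h <;> simp [h]), if_pos rfl, monomial_zero_one, catalanRunsGF]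
    exact congrArg _ (congrArg _ (funext fun v => if_neg v.2.2))
  have := finite_fiber_of_isCatalan (fun _ h => h) lengthRunsWeight_apply_zero
  have := finite_fiber_of_isCatalan (fun _ h => h)
    (wt := fun v => if v = [] then 0 else lengthRunsWeight v)
    (fun v => by split_ifs with h <;> simp [h])
  rw [← hu, ← hv, ← weightGF_prod, ← weightGF_single_add, catalanRunsGF]
  exact (weightGF_congr catalanJoinEquiv fun p => lengthRunsWeight_catalanJoin p.1.1 p.2.2.1).symm

theorem coeff_catalanRunsGF {n : ℕ} (hn : n ≠ 0) (k : ℕ) :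
    coeff (Finsupp.single 0 n + Finsupp.single 1 k) (catalanRunsGF R) =
      Nat.card {w : List ℕ | w ∈ CatalanWord n ∧ ascRuns w = k} := by
  rw [catalanRunsGF, coeff_weightGF]
  refine congrArg _ (Nat.card_congr ((Equiv.subtypeSubtypeEquivSubtypeInter
    (fun w => IsCatalan w ∧ w ≠ []) (lengthRunsWeight · = _)).trans
    (Equiv.subtypeEquivRight (q := (· ∈ {w | w ∈ CatalanWord n ∧ ascRuns w = k}))
      fun w => ?_)))
  rw [lengthRunsWeight_eq_iff, Set.mem_ofPred_eq, mem_catalanWord_iff]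
  constructor
  · rintro ⟨⟨hw, -⟩, hl, hk⟩
    exact ⟨⟨hl, hw⟩, hk⟩
  · rintro ⟨⟨hl, hw⟩, hk⟩
    exact ⟨⟨hw, by rintro rfl; exact hn hl.symm⟩, hl, hk⟩

theorem coeff_single_one_catalanRunsGF (k : ℕ) :
    coeff (Finsupp.single 1 k) (catalanRunsGF R) = 0 := by
  have : IsEmpty {w : {w // IsCatalan w ∧ w ≠ []} // lengthRunsWeight w = Finsupp.single 1 k} :=
    ⟨fun ⟨w, hw⟩ => w.2.2 <|
      List.length_eq_zero_iff.1 (by simpa using DFunLike.congr_fun hw 0)⟩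
  rw [catalanRunsGF, coeff_weightGF, Nat.card_of_isEmpty, Nat.cast_zero]

theorem eq_catalanRunsGF {F : MvPowerSeries (Fin 2) ℚ}
    (h0 : ∀ k : ℕ, coeff (Finsupp.single 1 k) F = 0)
    (h : ∀ n k : ℕ, 1 ≤ n → coeff (Finsupp.single 0 n + Finsupp.single 1 k) F =
      Nat.card {w : List ℕ | w ∈ CatalanWord n ∧ ascRuns w = k}) :
    F = catalanRunsGF ℚ := by
  ext d
  have hd : d = Finsupp.single 0 (d 0) + Finsupp.single 1 (d 1) := by
    ext i
    fin_cases i <;> simp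
  rcases Nat.eq_zero_or_pos (d 0) with hn | hn
  · rw [hd, hn, Finsupp.single_zero, zero_add, h0, coeff_single_one_catalanRunsGF]
  · rw [hd, h _ _ hn, coeff_catalanRunsGF hn.ne']

/-- The bivariate generating function `R(x,y)` of nonempty Catalan words by length and
number of runs of ascents satisfies `R = xy + x(1+y)R + xR²`. -/
theorem ascRuns_gf_equation (F : MvPowerSeries (Fin 2) ℚ)
    (h0 : ∀ k : ℕ, MvPowerSeries.coeff (Finsupp.single 1 k) F = 0)
    (h : ∀ n k : ℕ, 1 ≤ n →
      MvPowerSeries.coeff (Finsupp.single 0 n + Finsupp.single 1 k) F =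
        Nat.card {w : List ℕ | w ∈ CatalanWord n ∧ ascRuns w = k}) :
    F = MvPowerSeries.X 0 * MvPowerSeries.X 1
      + MvPowerSeries.X 0 * (1 + MvPowerSeries.X 1) * F
      + MvPowerSeries.X 0 * F ^ 2 := by
  obtain rfl := eq_catalanRunsGF h0 h
  nth_rewrite 1 [catalanRunsGF_eq]
  ring
end

section
/- For all integers n ≥ 1 and k ≥ 1 with 2k ≤ n + 1, the number w(n,k) of Catalan words of length n having exactly k runs of weak ascents satisfies n · w(n,k) = C(n,k) · C(n-k, k-1) · 2^{n-2k+1}; moreover w(n,k) = 0 when 2k > n + 1. -/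
/-- Number of runs of weak ascents of `w`: `1 + #{i : w i > w (i+1)}`. -/
def wAscRuns (w : List ℕ) : ℕ :=
  1 + ((Finset.range (w.length - 1)).filter
    (fun i => w.getD (i + 1) 0 < w.getD i 0)).card

/-!
Catalan words are built by appending letters: after a word ending in `a` one may append any
`j ≤ a + 1`, and a new run starts exactly when `j < a`. Counting by runs alone does not close
up into a recursion, because the effect of appending depends on the last letter; the moments
`M(N, k, r) = ∑ C(last letter, r)`, over words of length `N + 1` with `k + 1` runs, do: by the
hockey-stick identity `∑_{j < a} C(j, r) = C(a, r + 1)`,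
`M(N + 1, k, r) = 2 M(N, k, r) + M(N, k, r - 1) + M(N, k - 1, r + 1)`
(terms with a negative index omitted). The same recursion and initial values hold for
`β(k, r) C(N, 2k + r) 2^(N - 2k - r)`, where `β` is the ballot triangle, so the two agree.
At `r = 0`, `β(k, 0)` is the Catalan number and the count follows from binomial identities.
-/

open Finset

lemma concat_mem_catalanWord_iff {w : List ℕ} (hw : w ≠ []) {n j : ℕ} :
    w ++ [j] ∈ CatalanWord (n + 1) ↔ w ∈ CatalanWord n ∧ j ≤ w.getLastD 0 + 1 := by
  rcases eq_or_ne w.length n with rfl | hlen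
  swap
  · simp [CatalanWord, hlen]
  obtain ⟨m, hm⟩ : ∃ m, w.length = m + 1 := Nat.exists_eq_add_one.2 (List.length_pos_iff.2 hw)
  have hprefix : ∀ i < w.length, (w ++ [j]).getD i 0 = w.getD i 0 := List.getD_append _ _ _
  have hj : (w ++ [j]).getD w.length 0 = j := by simp
  have hlast : w.getD m 0 = w.getLastD 0 := by
    simp [List.getD_eq_getElem?_getD, List.getLast?_eq_getElem?, hm]
  have hstep : (∀ i < m, (w ++ [j]).getD (i + 1) 0 ≤ (w ++ [j]).getD i 0 + 1) ↔
      ∀ i < m, w.getD (i + 1) 0 ≤ w.getD i 0 + 1 :=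
    forall₂_congr fun i hi => by rw [hprefix i (by omega), hprefix (i + 1) (by omega)]
  have hend : (w ++ [j]).getD (m + 1) 0 ≤ (w ++ [j]).getD m 0 + 1 ↔ j ≤ w.getLastD 0 + 1 := by
    rw [hprefix m (by omega), hlast, ← hm, hj]
  simp only [CatalanWord, Set.mem_ofPred_eq, List.length_append, List.length_singleton, true_and,
    hprefix 0 (by omega), Nat.add_lt_add_iff_right, hm, Nat.forall_lt_succ_right, hstep, hend,
    and_assoc]

lemma wAscRuns_concat {w : List ℕ} (hw : w ≠ []) (j : ℕ) :
    wAscRuns (w ++ [j]) = wAscRuns w + if j < w.getLastD 0 then 1 else 0 := by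
  obtain ⟨m, hm⟩ : ∃ m, w.length = m + 1 := Nat.exists_eq_add_one.2 (List.length_pos_iff.2 hw)
  have hprefix : ∀ i < w.length, (w ++ [j]).getD i 0 = w.getD i 0 := List.getD_append _ _ _
  have hj : (w ++ [j]).getD (m + 1) 0 = j := by simp [← hm]
  have hlast : (w ++ [j]).getD m 0 = w.getLastD 0 := by
    rw [hprefix m (by omega)]
    simp [List.getD_eq_getElem?_getD, List.getLast?_eq_getElem?, hm]
  have hdesc : (range m).filter (fun i => (w ++ [j]).getD (i + 1) 0 < (w ++ [j]).getD i 0) =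
      (range m).filter (fun i => w.getD (i + 1) 0 < w.getD i 0) :=
    filter_congr fun i hi => by
      rw [hprefix i (by simp at hi; omega), hprefix (i + 1) (by simp at hi; omega)]
  unfold wAscRuns
  simp only [List.length_append, List.length_singleton, hm, add_tsub_cancel_right, range_add_one,
    filter_insert, hj, hlast, hdesc]
  split_ifs
  · rw [card_insert_of_notMem (by simp)]; omega
  · rfl

/-- The Catalan words of length `N + 1` (note the shift). -/
def catalanWords : ℕ → Finset (List ℕ)
  | 0 => {[0]}
  | N + 1 => (catalanWords N).biUnion fun w => (range (w.getLastD 0 + 2)).image fun j => w ++ [j]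

lemma mem_catalanWords_iff {N : ℕ} {w : List ℕ} :
    w ∈ catalanWords N ↔ w ∈ CatalanWord (N + 1) := by
  induction N generalizing w with
  | zero =>
    constructor
    · intro hw
      rw [catalanWords, mem_singleton] at hw
      subst hw
      exact ⟨rfl, rfl, by omega⟩
    · rintro ⟨hlen, h0, -⟩
      obtain ⟨a, rfl⟩ := List.length_eq_one_iff.mp hlen
      simp_all [catalanWords]
  | succ N ih =>
    simp only [catalanWords, mem_biUnion, mem_image, mem_range]
    constructor
    · rintro ⟨v, hv, j, hj, rfl⟩
      have hv' := ih.1 hv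
      have hne : v ≠ [] := List.ne_nil_of_length_eq_add_one hv'.1
      exact (concat_mem_catalanWord_iff hne).2 ⟨hv', by omega⟩
    · intro hw
      rcases w.eq_nil_or_concat' with rfl | ⟨v, j, rfl⟩
      · simp [CatalanWord] at hw
      have hne : v ≠ [] := by rintro rfl; simp [CatalanWord] at hw
      obtain ⟨hv, hj⟩ := (concat_mem_catalanWord_iff hne).1 hw
      exact ⟨v, ih.2 hv, j, by omega, rfl⟩

lemma ne_nil_of_mem_catalanWords {N : ℕ} {w : List ℕ} (hw : w ∈ catalanWords N) : w ≠ [] :=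
  List.ne_nil_of_length_eq_add_one (mem_catalanWords_iff.1 hw).1

lemma sum_catalanWords_succ {M : Type*} [AddCommMonoid M] (N : ℕ) (f : List ℕ → M) :
    ∑ w ∈ catalanWords (N + 1), f w =
      ∑ v ∈ catalanWords N, ∑ j ∈ range (v.getLastD 0 + 2), f (v ++ [j]) := by
  rw [catalanWords, sum_biUnion]
  · exact sum_congr rfl fun v _ => sum_image fun j _ j' _ h => by simpa using h
  · intro v _ v' _ hvv'
    simp only [Function.onFun, disjoint_left, mem_image]
    rintro _ ⟨j, _, rfl⟩ ⟨j', _, h⟩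
    exact hvv' (List.append_inj' h rfl).1.symm

def runMoment (N k r : ℕ) : ℕ :=
  ∑ w ∈ catalanWords N, if wAscRuns w = k + 1 then (w.getLastD 0).choose r else 0

lemma sum_range_choose_eq (a r : ℕ) : ∑ j ∈ range a, j.choose r = a.choose (r + 1) := by
  induction a with
  | zero => simp
  | succ a ih => rw [sum_range_succ, ih, Nat.choose_succ_succ', add_comm]

lemma sum_choose_over_appended_letters {ρ a k r : ℕ} (hρ : 1 ≤ ρ) :
    ∑ j ∈ range (a + 2), (if ρ + (if j < a then 1 else 0) = k + 1 then j.choose r else 0) =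
      2 * (if ρ = k + 1 then a.choose r else 0) +
        (if r = 0 then 0 else if ρ = k + 1 then a.choose (r - 1) else 0) +
        (if k = 0 then 0 else if ρ = k - 1 + 1 then a.choose (r + 1) else 0) := by
  have hdescent :
      ∑ j ∈ range a, (if ρ + (if j < a then 1 else 0) = k + 1 then j.choose r else 0) =
        if ρ = k then a.choose (r + 1) else 0 := by
    rw [sum_congr rfl fun j hj => by rw [if_pos (mem_range.1 hj)], sum_ite_irrel, sum_const_zero,
      sum_range_choose_eq]
    simp
  rw [sum_range_succ, sum_range_succ, hdescent]
  simp only [lt_irrefl, if_false, add_zero, if_neg (show ¬ a + 1 < a by omega)]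
  rcases r with _ | r
  · simp only [Nat.choose_zero_right]
    split_ifs <;> omega
  · simp only [Nat.choose_succ_succ' a r, Nat.add_sub_cancel]
    split_ifs <;> simp_all <;> omega

lemma runMoment_succ (N k r : ℕ) :
    runMoment (N + 1) k r = 2 * runMoment N k r + (if r = 0 then 0 else runMoment N k (r - 1)) +
      (if k = 0 then 0 else runMoment N (k - 1) (r + 1)) := by
  simp only [runMoment]
  rw [sum_catalanWords_succ, sum_congr rfl fun v hv => by
    simp only [wAscRuns_concat (ne_nil_of_mem_catalanWords hv), List.getLastD_concat]
    exact sum_choose_over_appended_letters (Nat.le_add_right _ _)]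
  simp only [sum_add_distrib, ← mul_sum, sum_ite_irrel, sum_const_zero]

def ballot : ℕ → ℕ → ℕ
  | 0, _ => 1
  | k + 1, 0 => ballot k 1
  | k + 1, r + 1 => ballot (k + 1) r + ballot k (r + 2)

lemma ballot_eq {k r : ℕ} (hkr : k ≠ 0 ∨ r ≠ 0) :
    ballot k r = (if r = 0 then 0 else ballot k (r - 1)) +
      (if k = 0 then 0 else ballot (k - 1) (r + 1)) := by
  rcases k with _ | k <;> rcases r with _ | r <;> simp_all [ballot]

lemma ballot_add_choose (k r : ℕ) :
    ballot k r + (2 * k + r).choose (k + r + 1) = (2 * k + r).choose k := by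
  induction k, r using ballot.induct with
  | case1 r => simp [ballot]
  | case2 k ih =>
    rw [Nat.succ_eq_add_one, ballot, show 2 * (k + 1) + 0 = 2 * k + 1 + 1 by ring,
      show k + 1 + 0 + 1 = k + 1 + 1 by ring, Nat.choose_succ_succ' (2 * k + 1) (k + 1),
      Nat.choose_succ_succ' (2 * k + 1) k]
    ring_nf at ih ⊢
    omega
  | case3 k r ih₁ ih₂ =>
    rw [Nat.succ_eq_add_one, Nat.succ_eq_add_one, ballot,
      show 2 * (k + 1) + (r + 1) = 2 * k + r + 2 + 1 by ring,
      show k + 1 + (r + 1) + 1 = k + r + 2 + 1 by ring,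
      Nat.choose_succ_succ' (2 * k + r + 2) (k + r + 2), Nat.choose_succ_succ' (2 * k + r + 2) k]
    ring_nf at ih₁ ih₂ ⊢
    omega

lemma ballot_zero_right (k : ℕ) : ballot k 0 = catalan k := by
  have hsum := ballot_add_choose k 0
  have hratio := Nat.choose_succ_right_eq (2 * k) k
  have hcat := succ_mul_catalan_eq_centralBinom k
  rw [Nat.centralBinom_eq_two_mul_choose] at hcat
  rw [show 2 * k - k = k by omega] at hratio
  simp only [add_zero] at hsum
  apply Nat.eq_of_mul_eq_mul_left (Nat.succ_pos k)
  nlinarith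

def closedMoment (N k r : ℕ) : ℕ :=
  ballot k r * N.choose (2 * k + r) * 2 ^ (N - (2 * k + r))

lemma choose_succ_succ_mul_two_pow (N m : ℕ) :
    (N + 1).choose (m + 1) * 2 ^ (N + 1 - (m + 1)) =
      2 * (N.choose (m + 1) * 2 ^ (N - (m + 1))) + N.choose m * 2 ^ (N - m) := by
  rw [Nat.choose_succ_succ', Nat.add_sub_add_right]
  rcases Nat.lt_or_ge m N with h | h
  · rw [show N - m = N - (m + 1) + 1 by omega, pow_succ]
    ring
  · rw [Nat.choose_eq_zero_of_lt (by omega : N < m + 1)]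
    ring

lemma closedMoment_succ (N k r : ℕ) :
    closedMoment (N + 1) k r = 2 * closedMoment N k r +
      (if r = 0 then 0 else closedMoment N k (r - 1)) +
      (if k = 0 then 0 else closedMoment N (k - 1) (r + 1)) := by
  rcases Nat.eq_zero_or_pos (2 * k + r) with h | h
  · obtain ⟨rfl, rfl⟩ : k = 0 ∧ r = 0 := by omega
    simp [closedMoment, ballot, pow_succ]
    ring
  obtain ⟨m, hm⟩ : ∃ m, 2 * k + r = m + 1 := Nat.exists_eq_add_one.2 h
  have hdiag : ∀ k' r', 2 * k' + r' = m →
      closedMoment N k' r' = ballot k' r' * (N.choose m * 2 ^ (N - m)) := by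
    rintro k' r' rfl
    rw [closedMoment, mul_assoc]
  have hr : (if r = 0 then 0 else closedMoment N k (r - 1)) =
      (if r = 0 then 0 else ballot k (r - 1)) * (N.choose m * 2 ^ (N - m)) := by
    split_ifs
    · simp
    · exact hdiag _ _ (by omega)
  have hk : (if k = 0 then 0 else closedMoment N (k - 1) (r + 1)) =
      (if k = 0 then 0 else ballot (k - 1) (r + 1)) * (N.choose m * 2 ^ (N - m)) := by
    split_ifs
    · simp
    · exact hdiag _ _ (by omega)
  rw [hr, hk, add_assoc, ← add_mul, ← ballot_eq (by omega), closedMoment, closedMoment, hm,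
    mul_assoc, choose_succ_succ_mul_two_pow]
  ring

lemma runMoment_eq_closedMoment (N k r : ℕ) : runMoment N k r = closedMoment N k r := by
  induction N generalizing k r with
  | zero =>
    simp only [runMoment, catalanWords, sum_singleton, show wAscRuns [0] = 1 from rfl,
      show [0].getLastD 0 = 0 from rfl]
    rcases k with _ | k <;> rcases r with _ | r <;>
      simp [closedMoment, ballot, Nat.choose_eq_zero_iff]
  | succ N ih => rw [runMoment_succ, closedMoment_succ, ih, ih, ih]

lemma card_catalanWord_wAscRuns (N k : ℕ) :
    Nat.card {w : List ℕ | w ∈ CatalanWord (N + 1) ∧ wAscRuns w = k + 1} =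
      runMoment N k 0 := by
  have hset : {w : List ℕ | w ∈ CatalanWord (N + 1) ∧ wAscRuns w = k + 1} =
      ↑((catalanWords N).filter fun w => wAscRuns w = k + 1) := by
    ext w
    simp [mem_catalanWords_iff]
  rw [hset, Nat.card_coe_set_eq, Set.ncard_coe_finset, card_filter]
  simp [runMoment]

lemma succ_mul_catalan_mul_choose (N K : ℕ) :
    (N + 1) * catalan K * N.choose (2 * K) = (N + 1).choose (K + 1) * (N - K).choose K := by
  apply Nat.eq_of_mul_eq_mul_left (Nat.succ_pos K)
  have hcat := succ_mul_catalan_eq_centralBinom K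
  have hsub := Nat.choose_mul (n := N) (k := 2 * K) (s := K) (by omega)
  rw [Nat.centralBinom_eq_two_mul_choose] at hcat
  rw [show 2 * K - K = K by omega] at hsub
  calc (K + 1) * ((N + 1) * catalan K * N.choose (2 * K))
      = (N + 1) * (N.choose (2 * K) * ((K + 1) * catalan K)) := by ring
    _ = (N + 1) * N.choose K * (N - K).choose K := by rw [hcat, hsub, mul_assoc]
    _ = (K + 1) * ((N + 1).choose (K + 1) * (N - K).choose K) := by
      rw [Nat.add_one_mul_choose_eq]
      ring

/-- The number `w(n,k)` of Catalan words of length `n` with exactly `k` runs of weak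
ascents satisfies `n · w(n,k) = C(n,k) C(n-k,k-1) 2^(n-2k+1)` when `2k ≤ n+1`, and
`w(n,k) = 0` when `2k > n+1`. -/
theorem wAscRuns_count_formula (n k : ℕ) (hn : 1 ≤ n) (hk : 1 ≤ k) :
    (2 * k ≤ n + 1 →
      n * Nat.card {w : List ℕ | w ∈ CatalanWord n ∧ wAscRuns w = k} =
        Nat.choose n k * Nat.choose (n - k) (k - 1) * 2 ^ (n + 1 - 2 * k)) ∧
    (n + 1 < 2 * k →
      Nat.card {w : List ℕ | w ∈ CatalanWord n ∧ wAscRuns w = k} = 0) := by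
  obtain ⟨N, rfl⟩ := Nat.exists_eq_add_one.2 hn
  obtain ⟨K, rfl⟩ := Nat.exists_eq_add_one.2 hk
  rw [card_catalanWord_wAscRuns, runMoment_eq_closedMoment, closedMoment, ballot_zero_right,
    add_zero]
  refine ⟨fun _ => ?_, fun h => ?_⟩
  · rw [show N + 1 + 1 - 2 * (K + 1) = N - 2 * K by omega, Nat.add_sub_add_right,
      Nat.add_sub_cancel, ← succ_mul_catalan_mul_choose]
    ring
  · rw [Nat.choose_eq_zero_of_lt (by omega)]
    simp
end
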